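/- Under the hypotheses of the previous statement, E[|Ψ_{t+1}|² | F_t] ≤ |Ψ_t|²·(2Re(λ) − 1) + R almost surely, and hence by induction E[|Ψ_t|²] ≤ |Ψ_0|²·(2Re(λ)−1)^t + R/(2 − 2Re(λ)). -/

import Mathlib

open MeasureTheory

private lemma rudvalis_condexp_clm_comm {Ω : Type*} {m m0 : MeasurableSpace Ω} (hm : m ≤ m0)
    {μ : Measure Ω} [IsFiniteMeasure μ] (T : ℂ →L[ℝ] ℝ) {f : Ω → ℂ}
    (hf : Integrable f μ) :
    μ[fun ω => T (f ω)|m] =ᵐ[μ] fun ω => T ((μ[f|m]) ω) := by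
  refine (ae_eq_condExp_of_forall_setIntegral_eq hm (T.integrable_comp hf)
    (fun s _ _ => (T.integrable_comp integrable_condExp).integrableOn)
    (fun s hs hμs => ?_)
    ((T.continuous.comp_stronglyMeasurable (stronglyMeasurable_condExp (m := m) (μ := μ) (f := f))).aestronglyMeasurable)).symm
  rw [T.integral_comp_comm integrable_condExp.integrableOn,
    T.integral_comp_comm hf.integrableOn, setIntegral_condExp hm hf hs]

private lemma rudvalis_part1 {Ω : Type*} {m0 : MeasurableSpace Ω} {μ : Measure Ω}
    [IsProbabilityMeasure μ] (ℱ : Filtration ℕ m0)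
    (Ψ : ℕ → Ω → ℂ) (lam : ℂ) (R : ℝ)
    (hadapt : Adapted ℱ Ψ)
    (hL2 : ∀ t, MemLp (Ψ t) 2 μ)
    (hcond : ∀ t, μ[Ψ (t + 1) | ℱ t] =ᵐ[μ] fun ω => lam * Ψ t ω)
    (hdiff : ∀ t, ∀ᵐ ω ∂μ,
      (μ[fun ω' => (‖Ψ (t + 1) ω' - Ψ t ω'‖) ^ 2 | ℱ t]) ω ≤ R) :
    ∀ t, ∀ᵐ ω ∂μ,
      (μ[fun ω' => (‖Ψ (t + 1) ω'‖) ^ 2 | ℱ t]) ω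
        ≤ (‖Ψ t ω‖) ^ 2 * (2 * lam.re - 1) + R := by
  intro t
  set m := ℱ t with hm_def
  have hm : m ≤ m0 := ℱ.le t
  set a := Ψ (t + 1) with ha_def
  set b := Ψ t with hb_def
  have ha2 : MemLp a 2 μ := hL2 (t + 1)
  have hb2 : MemLp b 2 μ := hL2 t
  -- real/imaginary parts in L²
  have hare : MemLp (fun ω => (a ω).re) 2 μ := Complex.reCLM.comp_memLp' ha2
  have haim : MemLp (fun ω => (a ω).im) 2 μ := Complex.imCLM.comp_memLp' ha2
  have hbre : MemLp (fun ω => (b ω).re) 2 μ := Complex.reCLM.comp_memLp' hb2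
  have hbim : MemLp (fun ω => (b ω).im) 2 μ := Complex.imCLM.comp_memLp' hb2
  have hhalf : (1 : ENNReal) / 1 = 1 / 2 + 1 / 2 := by rw [ENNReal.div_add_div_same]; norm_num; rw [ENNReal.div_self] <;> norm_num
  -- integrability of the pieces
  have hint_rr : Integrable (fun ω => (b ω).re * (a ω).re) μ := by
    have := memLp_one_iff_integrable.mp (hare.smul hbre (r := 1))
    exact this
  have hint_ii : Integrable (fun ω => (b ω).im * (a ω).im) μ := by
    have := memLp_one_iff_integrable.mp (haim.smul hbim (r := 1))
    exact this
  have hint_are : Integrable (fun ω => (a ω).re) μ := hare.integrable one_le_two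
  have hint_aim : Integrable (fun ω => (a ω).im) μ := haim.integrable one_le_two
  have habs : ∀ (f : Ω → ℂ), (fun ω => (‖f ω‖) ^ 2) = fun ω => ‖f ω‖ ^ 2 := by
    intro f; funext ω; simp
  have hint_a2 : Integrable (fun ω => (‖a ω‖) ^ 2) μ := by
    rw [habs]; exact ha2.norm.integrable_sq
  have hint_b2 : Integrable (fun ω => (‖b ω‖) ^ 2) μ := by
    rw [habs]; exact hb2.norm.integrable_sq
  have hint_d2 : Integrable (fun ω => (‖a ω - b ω‖) ^ 2) μ := by
    rw [habs]; exact (ha2.sub hb2).norm.integrable_sq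
  -- conditional expectation of re and im of a
  have hint_a : Integrable a μ := ha2.integrable one_le_two
  have h1 : μ[fun ω => (a ω).re|m] =ᵐ[μ] fun ω => (lam * b ω).re := by
    refine (rudvalis_condexp_clm_comm hm Complex.reCLM hint_a).trans ?_
    filter_upwards [hcond t] with ω hω
    simp [ha_def, hb_def, hm_def, hω]
  have h1' : μ[fun ω => (a ω).im|m] =ᵐ[μ] fun ω => (lam * b ω).im := by
    refine (rudvalis_condexp_clm_comm hm Complex.imCLM hint_a).trans ?_
    filter_upwards [hcond t] with ω hω
    simp [ha_def, hb_def, hm_def, hω]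
  -- strongly measurable wrt m
  have hbm : StronglyMeasurable[m] b := (hadapt t).stronglyMeasurable
  have hbrem : StronglyMeasurable[m] (fun ω => (b ω).re) :=
    Complex.continuous_re.comp_stronglyMeasurable hbm
  have hbimm : StronglyMeasurable[m] (fun ω => (b ω).im) :=
    Complex.continuous_im.comp_stronglyMeasurable hbm
  -- pull-out
  have h2 : μ[fun ω => (b ω).re * (a ω).re|m] =ᵐ[μ]
      fun ω => (b ω).re * (lam * b ω).re := by
    have := condExp_mul_of_stronglyMeasurable_left hbrem hint_rr hint_are
    refine this.trans ?_
    exact h1.mono fun ω hω => by simp only [Pi.mul_apply]; rw [hω]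
  have h3 : μ[fun ω => (b ω).im * (a ω).im|m] =ᵐ[μ]
      fun ω => (b ω).im * (lam * b ω).im := by
    have := condExp_mul_of_stronglyMeasurable_left hbimm hint_ii hint_aim
    refine this.trans ?_
    exact h1'.mono fun ω hω => by simp only [Pi.mul_apply]; rw [hω]
  -- condexp of |b|² is itself
  have hb2m : StronglyMeasurable[m] (fun ω => (‖b ω‖) ^ 2) := by
    rw [habs]; exact hbm.norm.pow 2
  have h4 : μ[fun ω => (‖b ω‖) ^ 2|m] = fun ω => (‖b ω‖) ^ 2 :=
    condExp_of_stronglyMeasurable hm hb2m hint_b2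
  -- the pointwise decomposition
  set g : Ω → ℝ := fun ω => (b ω).re * (a ω).re + (b ω).im * (a ω).im with hg_def
  have hint_g : Integrable g μ := hint_rr.add hint_ii
  have hkey : (fun ω => (‖a ω‖) ^ 2) =
      (fun ω => (‖a ω - b ω‖) ^ 2) + (g + g - fun ω => (‖b ω‖) ^ 2) := by
    funext ω
    simp only [Pi.add_apply, Pi.sub_apply, hg_def, Complex.sq_norm, Complex.normSq_apply,
      Complex.sub_re, Complex.sub_im]
    ring
  -- condexp additivity
  have hsum : μ[fun ω => (‖a ω‖) ^ 2|m] =ᵐ[μ]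
      μ[fun ω => (‖a ω - b ω‖) ^ 2|m]
        + (μ[g|m] + μ[g|m] - μ[fun ω => (‖b ω‖) ^ 2|m]) := by
    rw [hkey]
    refine (condExp_add hint_d2 ((hint_g.add hint_g).sub hint_b2) _).trans ?_
    refine Filter.EventuallyEq.add (Filter.EventuallyEq.refl _ _) ?_
    refine (condExp_sub (hint_g.add hint_g) hint_b2 _).trans ?_
    exact Filter.EventuallyEq.sub (condExp_add hint_g hint_g _) (Filter.EventuallyEq.refl _ _)
  have hgcond : μ[g|m] =ᵐ[μ] fun ω => lam.re * (‖b ω‖) ^ 2 := by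
    refine (condExp_add hint_rr hint_ii _).trans ?_
    filter_upwards [h2, h3] with ω e2 e3
    simp only [Pi.add_apply, e2, e3, Complex.mul_re, Complex.mul_im, Complex.sq_norm,
      Complex.normSq_apply]
    ring
  filter_upwards [hsum, hgcond, hdiff t] with ω e1 e2 e3
  have e4 : (μ[fun ω' => (‖Ψ (t+1) ω' - Ψ t ω'‖) ^ 2|m]) ω ≤ R := e3
  calc (μ[fun ω' => (‖a ω'‖) ^ 2|m]) ω
      = (μ[fun ω' => (‖a ω' - b ω'‖) ^ 2|m]) ω
        + ((μ[g|m]) ω + (μ[g|m]) ω - (μ[fun ω' => (‖b ω'‖) ^ 2|m]) ω) := by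
        simpa using e1
    _ ≤ R + (lam.re * (‖b ω‖) ^ 2 + lam.re * (‖b ω‖) ^ 2
        - (‖b ω‖) ^ 2) := by
        rw [e2, h4]
        exact add_le_add_left e4 _
    _ = (‖b ω‖) ^ 2 * (2 * lam.re - 1) + R := by ring


private lemma rudvalis_part2 {Ω : Type*} {m0 : MeasurableSpace Ω} {μ : Measure Ω}
    [IsProbabilityMeasure μ] (ℱ : Filtration ℕ m0)
    (Ψ : ℕ → Ω → ℂ) (lam : ℂ) (R : ℝ) (c : ℂ)
    (hL2 : ∀ t, MemLp (Ψ t) 2 μ)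
    (hre : 1 / 2 ≤ lam.re) (hre1 : lam.re < 1)
    (hdet : Ψ 0 = fun _ => c)
    (hdiff : ∀ t, ∀ᵐ ω ∂μ,
      (μ[fun ω' => (‖Ψ (t + 1) ω' - Ψ t ω'‖) ^ 2 | ℱ t]) ω ≤ R)
    (p1 : ∀ t, ∀ᵐ ω ∂μ,
      (μ[fun ω' => (‖Ψ (t + 1) ω'‖) ^ 2 | ℱ t]) ω
        ≤ (‖Ψ t ω‖) ^ 2 * (2 * lam.re - 1) + R) :
    ∀ t, (∫ ω, (‖Ψ t ω‖) ^ 2 ∂μ)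
        ≤ (‖c‖) ^ 2 * (2 * lam.re - 1) ^ t + R / (2 - 2 * lam.re) := by
  set q : ℝ := 2 * lam.re - 1 with hq_def
  have hq0 : 0 ≤ q := by simp only [hq_def]; linarith
  have hq1 : q < 1 := by simp only [hq_def]; linarith
  have hden : 0 < 2 - 2 * lam.re := by linarith
  -- R is nonnegative
  have hR : 0 ≤ R := by
    have h0 : ∀ᵐ ω ∂μ, 0 ≤ (μ[fun ω' => (‖Ψ 1 ω' - Ψ 0 ω'‖) ^ 2 | ℱ 0]) ω :=
      condExp_nonneg (Filter.Eventually.of_forall fun ω => sq_nonneg _)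
    obtain ⟨ω, h1, h2⟩ := (h0.and (hdiff 0)).exists
    linarith
  have habs : ∀ (f : Ω → ℂ), (fun ω => (‖f ω‖) ^ 2) = fun ω => ‖f ω‖ ^ 2 := by
    intro f; funext ω; simp
  have hI : ∀ t, Integrable (fun ω => (‖Ψ t ω‖) ^ 2) μ := by
    intro t; rw [habs]; exact (hL2 t).norm.integrable_sq
  -- one-step inequality on integrals
  have step : ∀ t, (∫ ω, (‖Ψ (t + 1) ω‖) ^ 2 ∂μ)
      ≤ q * (∫ ω, (‖Ψ t ω‖) ^ 2 ∂μ) + R := by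
    intro t
    have hm : (ℱ t : MeasurableSpace Ω) ≤ m0 := ℱ.le t
    have e1 : (∫ ω, (‖Ψ (t + 1) ω‖) ^ 2 ∂μ)
        = ∫ ω, (μ[fun ω' => (‖Ψ (t + 1) ω'‖) ^ 2 | ℱ t]) ω ∂μ :=
      (integral_condExp hm).symm
    have hrhs : Integrable (fun ω => (‖Ψ t ω‖) ^ 2 * q + R) μ :=
      ((hI t).mul_const q).add (integrable_const R)
    have e2 : ∫ ω, (μ[fun ω' => (‖Ψ (t + 1) ω'‖) ^ 2 | ℱ t]) ω ∂μ
        ≤ ∫ ω, ((‖Ψ t ω‖) ^ 2 * q + R) ∂μ :=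
      integral_mono_ae integrable_condExp hrhs (p1 t)
    have e3 : ∫ ω, ((‖Ψ t ω‖) ^ 2 * q + R) ∂μ
        = q * (∫ ω, (‖Ψ t ω‖) ^ 2 ∂μ) + R := by
      rw [integral_add ((hI t).mul_const q) (integrable_const R), integral_mul_const,
        integral_const]
      simp [mul_comm]
    rw [e1, ← e3]; exact e2
  intro t
  induction t with
  | zero =>
    have : (∫ ω, (‖Ψ 0 ω‖) ^ 2 ∂μ) = (‖c‖) ^ 2 := by
      rw [hdet]; simp
    rw [this, pow_zero, mul_one]
    have : 0 ≤ R / (2 - 2 * lam.re) := div_nonneg hR (le_of_lt hden)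
    linarith
  | succ t ih =>
    have h1 : q * (∫ ω, (‖Ψ t ω‖) ^ 2 ∂μ) + R
        ≤ q * ((‖c‖) ^ 2 * q ^ t + R / (2 - 2 * lam.re)) + R :=
      add_le_add_left (mul_le_mul_of_nonneg_left ih hq0) R
    have h2 : q * ((‖c‖) ^ 2 * q ^ t + R / (2 - 2 * lam.re)) + R
        = (‖c‖) ^ 2 * q ^ (t + 1) + R / (2 - 2 * lam.re) := by
      have hne : 2 - 2 * lam.re ≠ 0 := ne_of_gt hden
      have hne' : 1 - lam.re ≠ 0 := (by linarith : (0:ℝ) < 1 - lam.re).ne'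
      field_simp
      ring
    calc (∫ ω, (‖Ψ (t + 1) ω‖) ^ 2 ∂μ)
        ≤ q * (∫ ω, (‖Ψ t ω‖) ^ 2 ∂μ) + R := step t
      _ ≤ q * ((‖c‖) ^ 2 * q ^ t + R / (2 - 2 * lam.re)) + R := h1
      _ = (‖c‖) ^ 2 * q ^ (t + 1) + R / (2 - 2 * lam.re) := h2


/-- Under the hypotheses of the previous statement,
`E[|Ψ (t+1)|² | ℱ t] ≤ |Ψ t|² (2 Re lam - 1) + R` a.s., and by induction
`E[|Ψ t|²] ≤ |Ψ 0|² (2 Re lam - 1)^t + R / (2 - 2 Re lam)`. -/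
theorem rudvalis_stmt_3 {Ω : Type*} {m0 : MeasurableSpace Ω} {μ : Measure Ω}
    [IsProbabilityMeasure μ] (ℱ : Filtration ℕ m0)
    (Ψ : ℕ → Ω → ℂ) (lam : ℂ) (R : ℝ) (c : ℂ)
    (hadapt : Adapted ℱ Ψ)
    (hL2 : ∀ t, MemLp (Ψ t) 2 μ)
    (hre : 1 / 2 ≤ lam.re) (hre1 : lam.re < 1)
    (hdet : Ψ 0 = fun _ => c)
    (hcond : ∀ t, μ[Ψ (t + 1) | ℱ t] =ᵐ[μ] fun ω => lam * Ψ t ω)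
    (hdiff : ∀ t, ∀ᵐ ω ∂μ,
      (μ[fun ω' => (‖Ψ (t + 1) ω' - Ψ t ω'‖) ^ 2 | ℱ t]) ω ≤ R) :
    (∀ t, ∀ᵐ ω ∂μ,
      (μ[fun ω' => (‖Ψ (t + 1) ω'‖) ^ 2 | ℱ t]) ω
        ≤ (‖Ψ t ω‖) ^ 2 * (2 * lam.re - 1) + R) ∧
    (∀ t, (∫ ω, (‖Ψ t ω‖) ^ 2 ∂μ)
        ≤ (‖c‖) ^ 2 * (2 * lam.re - 1) ^ t + R / (2 - 2 * lam.re)) := by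
  refine ⟨rudvalis_part1 ℱ Ψ lam R hadapt hL2 hcond hdiff, ?_⟩
  exact rudvalis_part2 ℱ Ψ lam R c hL2 hre hre1 hdet hdiff
    (rudvalis_part1 ℱ Ψ lam R hadapt hL2 hcond hdiff)
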